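/- Assume the standing assumptions on ψ and let J satisfy the jumping-kernel bounds with constant C̄. Define ℰ(f,f) := ∫_{ℝ^d}∫_{ℝ^d} (f(x)−f(y))² J(x,y) dx dy ∈ [0,∞]. Then there exists a constant C>0, depending only on d, C̄, β₁, β₂, C_L, C_U, such that for every bounded measurable f ∈ L²(ℝ^d) and every r>0: (1/r^d)·∫_{ℝ^d}∫_{B(x,r)} (f(x)−f(y))² dy dx ≤ C·Φ(r)·ℰ(f,f), where B(x,r) := {y∈ℝ^d : |x−y|<r}. -/

import Mathlib

/-!
Write `g(h) = ∫ (f(x) - f(x+h))² dx` and `G(t) = ∫_{|h|<t} g(h) dh`, so that the left-hand side is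
`r⁻ᵈ G(r)`. Telescoping along `x, x+h, …, x+nh` gives `g(nh) ≤ n² g(h)`, and rescaling the ball
then gives `G(r) ≤ (2r/t)^(d+2) G(t)` for `0 < t ≤ r`. Since `ψ` is nondecreasing,
`1/(|h|ᵈ ψ(|h|)) ≥ ∫_{|h|}^∞ d/(t^(d+1) ψ(t)) dt`, so Tonelli and the lower bound on `J` give
`ℰ(f,f) ≥ C̄⁻¹ ∫_0^∞ d G(t)/(t^(d+1) ψ(t)) dt ≥ C̄⁻¹ d (2r)^(-d-2) G(r) ∫_0^r t/ψ(t) dt`,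
which is the claim with `Φ(r) = r²/(2∫_0^r s/ψ(s) ds)`.
-/

open MeasureTheory Set Module
open scoped ENNReal

theorem sq_sub_le_mul_sum_sq_sub (a : ℕ → ℝ) (n : ℕ) :
    (a 0 - a n) ^ 2 ≤ n * ∑ i ∈ Finset.range n, (a i - a (i + 1)) ^ 2 := by
  have h := sq_sum_le_card_mul_sum_sq (s := Finset.range n) (f := fun i => a i - a (i + 1))
  rwa [Finset.sum_range_sub', Finset.card_range] at h

theorem exists_nat_div_le_and_mul_le_two_mul {r t : ℝ} (ht : 0 < t) (htr : t ≤ r) :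
    ∃ n : ℕ, 0 < n ∧ r / n ≤ t ∧ n * t ≤ 2 * r := by
  have h1 : 1 ≤ r / t := (one_le_div ht).2 htr
  refine ⟨⌈r / t⌉₊, Nat.ceil_pos.2 (by linarith), ?_, ?_⟩
  · rw [div_le_iff₀ (by positivity), mul_comm, ← div_le_iff₀ ht]
    exact Nat.le_ceil _
  · have h2 : (⌈r / t⌉₊ : ℝ) < r / t + 1 := Nat.ceil_lt_add_one (by positivity)
    have h3 : (⌈r / t⌉₊ : ℝ) ≤ 2 * r / t := by rw [mul_div_assoc]; linarith
    rwa [le_div_iff₀ ht] at h3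

theorem lintegral_Ioi_natCast_div_pow_succ {d : ℕ} (hd : d ≠ 0) {s : ℝ} (hs : 0 < s) :
    ∫⁻ t in Ioi s, ENNReal.ofReal (d / t ^ (d + 1)) = ENNReal.ofReal (1 / s ^ d) := by
  have ha : -((d : ℝ) + 1) < -1 := by
    have : (0 : ℝ) < d := by positivity
    linarith
  have hpow : ∀ t ∈ Ioi s, (d : ℝ) / t ^ (d + 1) = d * t ^ (-((d : ℝ) + 1)) := fun t ht => by
    rw [Real.rpow_neg (hs.trans ht).le, ← Nat.cast_succ, Real.rpow_natCast, div_eq_mul_inv]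
  rw [setLIntegral_congr_fun measurableSet_Ioi (fun t ht => by rw [hpow t ht]),
    ← ofReal_integral_eq_lintegral_ofReal ((integrableOn_Ioi_rpow_of_lt ha hs).const_mul _)
      ((ae_restrict_iff' measurableSet_Ioi).2 (.of_forall fun t ht =>
        mul_nonneg d.cast_nonneg (Real.rpow_nonneg (hs.trans ht).le _))),
    integral_const_mul, integral_Ioi_rpow_of_lt ha hs]
  congr 1
  rw [show -((d : ℝ) + 1) + 1 = -d by ring, Real.rpow_neg hs.le, Real.rpow_natCast]
  have : (d : ℝ) ≠ 0 := by exact_mod_cast hd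
  field_simp

theorem setLIntegral_Ioi_div_pow_mul_le {ψ : ℝ → ℝ} (hψ : Monotone ψ) {d : ℕ} (hd : d ≠ 0)
    {s : ℝ} (hs : 0 < s) (hψs : 0 < ψ s) :
    ∫⁻ t in Ioi s, ENNReal.ofReal (d / (t ^ (d + 1) * ψ t)) ≤ ENNReal.ofReal (1 / (s ^ d * ψ s)) :=
  calc ∫⁻ t in Ioi s, ENNReal.ofReal (d / (t ^ (d + 1) * ψ t))
      ≤ ∫⁻ t in Ioi s, ENNReal.ofReal (d / t ^ (d + 1)) * ENNReal.ofReal (1 / ψ s) := by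
        refine setLIntegral_mono' measurableSet_Ioi fun t (ht : s < t) => ?_
        have ht0 : 0 < t := hs.trans ht
        rw [← ENNReal.ofReal_mul (by positivity), div_mul_div_comm, mul_one]
        gcongr
        exact hψ ht.le
    _ = ENNReal.ofReal (1 / (s ^ d * ψ s)) := by
        rw [lintegral_mul_const' _ _ ENNReal.ofReal_ne_top,
          lintegral_Ioi_natCast_div_pow_succ hd hs, ← ENNReal.ofReal_mul (by positivity), one_div_mul_one_div]

theorem setIntegral_Ioo_pos {f : ℝ → ℝ} {a b : ℝ} (hab : a < b) (hf : IntegrableOn f (Ioo a b))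
    (hpos : ∀ x ∈ Ioo a b, 0 < f x) : 0 < ∫ x in Ioo a b, f x := by
  rw [← integral_Ioc_eq_integral_Ioo, ← intervalIntegral.integral_of_le hab.le]
  exact intervalIntegral.intervalIntegral_pos_of_pos_on
    ((intervalIntegrable_iff_integrableOn_Ioo_of_le hab.le).2 hf) hpos hab

theorem lintegral_lintegral_eq_lintegral_lintegral_add {G : Type*} [AddGroup G] [MeasurableSpace G]
    [MeasurableAdd₂ G] {μ : Measure G} [SFinite μ] [μ.IsAddLeftInvariant] {F : G → G → ℝ≥0∞}
    (hF : Measurable (Function.uncurry F)) :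
    ∫⁻ x, ∫⁻ y, F x y ∂μ ∂μ = ∫⁻ h, ∫⁻ x, F x (x + h) ∂μ ∂μ :=
  calc ∫⁻ x, ∫⁻ y, F x y ∂μ ∂μ = ∫⁻ x, ∫⁻ h, F x (x + h) ∂μ ∂μ :=
        lintegral_congr fun x => (lintegral_add_left_eq_self (F x) x).symm
    _ = ∫⁻ h, ∫⁻ x, F x (x + h) ∂μ ∂μ := lintegral_lintegral_swap
        (hF.comp (measurable_fst.prodMk (measurable_fst.add measurable_snd))).aemeasurable

section IncrementEnergy

variable {E : Type*} [MeasurableSpace E]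

noncomputable def incrementEnergy [Add E] (μ : Measure E) (f : E → ℝ) (h : E) : ℝ≥0∞ :=
  ∫⁻ x, ENNReal.ofReal ((f x - f (x + h)) ^ 2) ∂μ

noncomputable def ballIncrementEnergy [SeminormedAddGroup E] (μ : Measure E) (f : E → ℝ)
    (t : ℝ) : ℝ≥0∞ :=
  ∫⁻ h in Metric.ball 0 t, incrementEnergy μ f h ∂μ

theorem measurable_incrementEnergy [AddGroup E] [MeasurableAdd₂ E] {μ : Measure E} [SFinite μ]
    {f : E → ℝ} (hf : Measurable f) : Measurable (incrementEnergy μ f) :=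
  Measurable.lintegral_prod_left (((hf.comp measurable_fst).sub
    (hf.comp (measurable_fst.add measurable_snd))).pow_const 2).ennreal_ofReal

theorem incrementEnergy_zero [AddGroup E] (μ : Measure E) (f : E → ℝ) :
    incrementEnergy μ f 0 = 0 := by
  simp [incrementEnergy]

theorem incrementEnergy_nsmul_le [AddGroup E] [MeasurableAdd₂ E] {μ : Measure E}
    [μ.IsAddRightInvariant] {f : E → ℝ} (hf : Measurable f) (u : E) (n : ℕ) :
    incrementEnergy μ f (n • u) ≤ n ^ 2 * incrementEnergy μ f u := by
  have hstep : ∀ i : ℕ,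
      Measurable fun x => ENNReal.ofReal ((f (x + i • u) - f (x + i • u + u)) ^ 2) :=
    fun i => (((hf.comp (measurable_add_const _)).sub
      (hf.comp ((measurable_add_const _).add_const _))).pow_const 2).ennreal_ofReal
  calc incrementEnergy μ f (n • u)
      ≤ ∫⁻ x, n * ∑ i ∈ Finset.range n,
          ENNReal.ofReal ((f (x + i • u) - f (x + i • u + u)) ^ 2) ∂μ := by
        refine lintegral_mono fun x => ?_
        rw [← ENNReal.ofReal_sum_of_nonneg fun i _ => sq_nonneg _, ← ENNReal.ofReal_natCast,
          ← ENNReal.ofReal_mul n.cast_nonneg]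
        refine ENNReal.ofReal_le_ofReal ?_
        simpa [succ_nsmul, add_assoc] using sq_sub_le_mul_sum_sq_sub (fun i => f (x + i • u)) n
    _ = n * ∑ i ∈ Finset.range n, incrementEnergy μ f u := by
        rw [lintegral_const_mul _ (Finset.measurable_sum _ fun i _ => hstep i),
          lintegral_finsetSum _ fun i _ => hstep i]
        congr 1
        refine Finset.sum_congr rfl fun i _ => ?_
        exact lintegral_add_right_eq_self (fun x => ENNReal.ofReal ((f x - f (x + u)) ^ 2)) (i • u)
    _ = n ^ 2 * incrementEnergy μ f u := by
        rw [Finset.sum_const, Finset.card_range, nsmul_eq_mul, ← mul_assoc, sq]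

end IncrementEnergy

theorem lintegral_mul_setLIntegral_ball_eq {E : Type*} [NormedAddCommGroup E] [MeasurableSpace E]
    [OpensMeasurableSpace E] {μ : Measure E} [SFinite μ] {V : ℝ → ℝ≥0∞} {g : E → ℝ≥0∞}
    (hV : Measurable V) (hg : Measurable g) :
    ∫⁻ t, V t * ∫⁻ h in Metric.ball 0 t, g h ∂μ = ∫⁻ h, g h * (∫⁻ t in Ioi ‖h‖, V t) ∂μ := by
  have hS : MeasurableSet {p : ℝ × E | ‖p.2‖ < p.1} :=
    measurableSet_lt measurable_snd.norm measurable_fst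
  have hF : Measurable (Function.uncurry fun t h => g h * (Ioi ‖h‖).indicator V t) :=
    (hg.comp measurable_snd).mul ((hV.comp measurable_fst).indicator hS)
  calc ∫⁻ t, V t * ∫⁻ h in Metric.ball 0 t, g h ∂μ
      = ∫⁻ t, ∫⁻ h, g h * (Ioi ‖h‖).indicator V t ∂μ := by
        refine lintegral_congr fun t => ?_
        rw [← lintegral_indicator measurableSet_ball, ← lintegral_const_mul _
          (hg.indicator measurableSet_ball)]
        refine lintegral_congr fun h => ?_
        by_cases hh : ‖h‖ < t
        · rw [indicator_of_mem (mem_ball_zero_iff.2 hh), indicator_of_mem (mem_Ioi.2 hh), mul_comm]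
        · rw [indicator_of_notMem (fun h' => hh (mem_ball_zero_iff.1 h')),
            indicator_of_notMem (fun h' => hh (mem_Ioi.1 h')), mul_zero, mul_zero]
    _ = ∫⁻ h, (∫⁻ t, g h * (Ioi ‖h‖).indicator V t) ∂μ := lintegral_lintegral_swap hF.aemeasurable
    _ = ∫⁻ h, g h * (∫⁻ t in Ioi ‖h‖, V t) ∂μ := by
        refine lintegral_congr fun h => ?_
        rw [lintegral_const_mul _ (hV.indicator measurableSet_Ioi),
          lintegral_indicator measurableSet_Ioi]

theorem lintegral_incrementEnergy_mul_eq {E : Type*} [NormedAddCommGroup E] [MeasurableSpace E]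
    [BorelSpace E] [SecondCountableTopology E] {μ : Measure E} [SFinite μ] [μ.IsAddLeftInvariant]
    {w : ℝ → ℝ≥0∞} (hw : Measurable w) {f : E → ℝ} (hf : Measurable f) :
    ∫⁻ h, incrementEnergy μ f h * w ‖h‖ ∂μ =
      ∫⁻ x, ∫⁻ y, ENNReal.ofReal ((f x - f y) ^ 2) * w (dist x y) ∂μ ∂μ := by
  rw [lintegral_lintegral_eq_lintegral_lintegral_add
    ((((hf.comp measurable_fst).sub (hf.comp measurable_snd)).pow_const 2).ennreal_ofReal.mul
      (hw.comp measurable_dist))]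
  simp_rw [dist_self_add_right]
  refine lintegral_congr fun h => (lintegral_mul_const _ ?_).symm
  exact ((hf.sub (hf.comp (measurable_add_const h))).pow_const 2).ennreal_ofReal

noncomputable def jumpEnergy {E : Type*} [MeasurableSpace E] (μ : Measure E) (J : E → E → ℝ)
    (f : E → ℝ) : ℝ≥0∞ :=
  ∫⁻ x, ∫⁻ y, ENNReal.ofReal ((f x - f y) ^ 2 * J x y) ∂μ ∂μ

theorem ofReal_mul_lintegral_ballIncrementEnergy_le_jumpEnergy {E : Type*} [NormedAddCommGroup E]
    [MeasurableSpace E] [BorelSpace E] [SecondCountableTopology E] {μ : Measure E} [SFinite μ]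
    [μ.IsAddLeftInvariant] {ψ : ℝ → ℝ} (hψ : Monotone ψ) (hψ_pos : ∀ t, 0 < t → 0 < ψ t) {d : ℕ}
    (hd : d ≠ 0) {J : E → E → ℝ} {c : ℝ}
    (hJ : ∀ x y, x ≠ y → c / (dist x y ^ d * ψ (dist x y)) ≤ J x y) {f : E → ℝ}
    (hf : Measurable f) :
    ENNReal.ofReal c *
        ∫⁻ t, ENNReal.ofReal (d / (t ^ (d + 1) * ψ t)) * ballIncrementEnergy μ f t ≤
      jumpEnergy μ J f := by
  set V : ℝ → ℝ≥0∞ := fun t => ENNReal.ofReal (d / (t ^ (d + 1) * ψ t))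
  set W : ℝ → ℝ≥0∞ := fun s => ENNReal.ofReal (1 / (s ^ d * ψ s))
  have hV : Measurable V :=
    (measurable_const.div ((measurable_id.pow_const _).mul hψ.measurable)).ennreal_ofReal
  have hW : Measurable W :=
    (measurable_const.div ((measurable_id.pow_const _).mul hψ.measurable)).ennreal_ofReal
  have hkernel : ∀ x y, ENNReal.ofReal c * (ENNReal.ofReal ((f x - f y) ^ 2) * W (dist x y)) ≤
      ENNReal.ofReal ((f x - f y) ^ 2 * J x y) := fun x y => by
    rcases eq_or_ne x y with rfl | hxy
    · simp
    have := hψ_pos _ (dist_pos.2 hxy)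
    rw [← ENNReal.ofReal_mul (sq_nonneg _), ← ENNReal.ofReal_mul' (by positivity)]
    refine ENNReal.ofReal_le_ofReal ?_
    calc c * ((f x - f y) ^ 2 * (1 / (dist x y ^ d * ψ (dist x y))))
        = (f x - f y) ^ 2 * (c / (dist x y ^ d * ψ (dist x y))) := by ring
      _ ≤ (f x - f y) ^ 2 * J x y := mul_le_mul_of_nonneg_left (hJ x y hxy) (sq_nonneg _)
  calc ENNReal.ofReal c * ∫⁻ t, V t * ballIncrementEnergy μ f t
      = ENNReal.ofReal c * ∫⁻ h, incrementEnergy μ f h * (∫⁻ t in Ioi ‖h‖, V t) ∂μ :=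
        congrArg _ (lintegral_mul_setLIntegral_ball_eq hV (measurable_incrementEnergy hf))
    _ ≤ ENNReal.ofReal c * ∫⁻ h, incrementEnergy μ f h * W ‖h‖ ∂μ := by
        gcongr _ * ∫⁻ _, ?_ ∂μ with h
        rcases eq_or_ne h 0 with rfl | hh
        · simp [incrementEnergy_zero]
        · gcongr
          exact setLIntegral_Ioi_div_pow_mul_le hψ hd (norm_pos_iff.2 hh)
            (hψ_pos _ (norm_pos_iff.2 hh))
    _ = ∫⁻ x, ∫⁻ y, ENNReal.ofReal c * (ENNReal.ofReal ((f x - f y) ^ 2) * W (dist x y)) ∂μ ∂μ := by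
        rw [lintegral_incrementEnergy_mul_eq hW hf,
          ← lintegral_const_mul' _ _ ENNReal.ofReal_ne_top]
        simp_rw [← lintegral_const_mul' _ _ ENNReal.ofReal_ne_top]
    _ ≤ jumpEnergy μ J f := lintegral_mono fun x => lintegral_mono fun y => hkernel x y

section Haar

variable {E : Type*} [NormedAddCommGroup E] [NormedSpace ℝ E] [MeasurableSpace E] [BorelSpace E]
  [FiniteDimensional ℝ E] {μ : Measure E} [μ.IsAddHaarMeasure]

theorem lintegral_comp_inv_smul_of_pos (F : E → ℝ≥0∞) {R : ℝ} (hR : 0 < R) :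
    ∫⁻ x, F (R⁻¹ • x) ∂μ = ENNReal.ofReal (R ^ finrank ℝ E) * ∫⁻ x, F x ∂μ := by
  have hR' : R⁻¹ ≠ 0 := inv_ne_zero hR.ne'
  have h := lintegral_map_equiv (μ := μ) F (MeasurableEquiv.smul₀ R⁻¹ hR')
  rw [MeasurableEquiv.coe_smul₀, Measure.map_addHaar_smul μ hR', lintegral_smul_measure, inv_pow,
    inv_inv, abs_of_pos (by positivity)] at h
  exact h.symm

theorem lintegral_lintegral_ball_eq_ballIncrementEnergy {f : E → ℝ} (hf : Measurable f) (r : ℝ) :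
    ∫⁻ x, ∫⁻ y in Metric.ball x r, ENNReal.ofReal ((f x - f y) ^ 2) ∂μ ∂μ =
      ballIncrementEnergy μ f r := by
  set S : Set (E × E) := {p | dist p.2 p.1 < r}
  set K : E × E → ℝ≥0∞ := fun p => ENNReal.ofReal ((f p.1 - f p.2) ^ 2)
  have hK : Measurable K :=
    (((hf.comp measurable_fst).sub (hf.comp measurable_snd)).pow_const 2).ennreal_ofReal
  have hS : MeasurableSet S :=
    measurableSet_lt (measurable_snd.dist measurable_fst) measurable_const
  calc ∫⁻ x, ∫⁻ y in Metric.ball x r, ENNReal.ofReal ((f x - f y) ^ 2) ∂μ ∂μ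
      = ∫⁻ x, ∫⁻ y, S.indicator K (x, y) ∂μ ∂μ :=
        lintegral_congr fun x => (lintegral_indicator measurableSet_ball _).symm
    _ = ∫⁻ h, ∫⁻ x, S.indicator K (x, x + h) ∂μ ∂μ :=
        lintegral_lintegral_eq_lintegral_lintegral_add (hK.indicator hS)
    _ = ∫⁻ h, (Metric.ball 0 r).indicator (incrementEnergy μ f) h ∂μ := by
        refine lintegral_congr fun h => ?_
        by_cases hh : h ∈ Metric.ball 0 r
        · have hmem : ∀ x, (x, x + h) ∈ S := fun x => by simpa [S] using hh
          simp only [indicator_of_mem (hmem _), indicator_of_mem hh]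
          rfl
        · have hmem : ∀ x, (x, x + h) ∉ S := fun x => by simpa [S] using hh
          simp only [indicator_of_notMem (hmem _), indicator_of_notMem hh, lintegral_zero]
    _ = ballIncrementEnergy μ f r := lintegral_indicator measurableSet_ball _

theorem ballIncrementEnergy_le_pow_mul {f : E → ℝ} (hf : Measurable f) (r : ℝ) {n : ℕ}
    (hn : 0 < n) :
    ballIncrementEnergy μ f r ≤ n ^ (finrank ℝ E + 2) * ballIncrementEnergy μ f (r / n) := by
  have hn' : (0 : ℝ) < n := Nat.cast_pos.2 hn
  calc ballIncrementEnergy μ f r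
      = ∫⁻ h, (Metric.ball 0 r).indicator (incrementEnergy μ f) h ∂μ :=
        (lintegral_indicator measurableSet_ball _).symm
    _ ≤ ∫⁻ h, n ^ 2 *
          (Metric.ball 0 (r / n)).indicator (incrementEnergy μ f) ((n : ℝ)⁻¹ • h) ∂μ := by
        refine lintegral_mono fun h => ?_
        by_cases hh : h ∈ Metric.ball 0 r
        · have hmem : (n : ℝ)⁻¹ • h ∈ Metric.ball (0 : E) (r / n) := by
            rw [mem_ball_zero_iff, norm_smul, norm_inv, Real.norm_natCast, inv_mul_eq_div]
            exact div_lt_div_of_pos_right (mem_ball_zero_iff.1 hh) hn'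
          rw [indicator_of_mem hh, indicator_of_mem hmem]
          calc incrementEnergy μ f h = incrementEnergy μ f (n • ((n : ℝ)⁻¹ • h)) := by
                rw [← Nat.cast_smul_eq_nsmul ℝ, smul_smul, mul_inv_cancel₀ hn'.ne', one_smul]
            _ ≤ _ := incrementEnergy_nsmul_le hf _ n
        · rw [indicator_of_notMem hh]
          exact bot_le
    _ = n ^ (finrank ℝ E + 2) * ballIncrementEnergy μ f (r / n) := by
        rw [lintegral_const_mul' _ _ (by simp),
          lintegral_comp_inv_smul_of_pos ((Metric.ball 0 (r / n)).indicator _) hn',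
          lintegral_indicator measurableSet_ball, ENNReal.ofReal_pow hn'.le, ENNReal.ofReal_natCast,
          ← mul_assoc, ← pow_add, add_comm 2]
        rfl

theorem pow_mul_ballIncrementEnergy_le {f : E → ℝ} (hf : Measurable f) {r t : ℝ} (ht : 0 < t)
    (htr : t ≤ r) :
    ENNReal.ofReal ((t / (2 * r)) ^ (finrank ℝ E + 2)) * ballIncrementEnergy μ f r ≤
      ballIncrementEnergy μ f t := by
  obtain ⟨n, hn, hrn, hnt⟩ := exists_nat_div_le_and_mul_le_two_mul ht htr
  have hr : 0 < r := ht.trans_le htr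
  calc ENNReal.ofReal ((t / (2 * r)) ^ (finrank ℝ E + 2)) * ballIncrementEnergy μ f r
      ≤ ENNReal.ofReal ((t / (2 * r)) ^ (finrank ℝ E + 2)) *
          (ENNReal.ofReal ((n : ℝ) ^ (finrank ℝ E + 2)) * ballIncrementEnergy μ f t) := by
        rw [ENNReal.ofReal_pow n.cast_nonneg, ENNReal.ofReal_natCast]
        gcongr
        refine (ballIncrementEnergy_le_pow_mul hf r hn).trans ?_
        gcongr
        exact lintegral_mono_set (Metric.ball_subset_ball hrn)
    _ = ENNReal.ofReal ((n * t / (2 * r)) ^ (finrank ℝ E + 2)) * ballIncrementEnergy μ f t := by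
        rw [← mul_assoc, ← ENNReal.ofReal_mul (by positivity), ← mul_pow]
        ring_nf
    _ ≤ ballIncrementEnergy μ f t := by
        refine mul_le_of_le_one_left' (ENNReal.ofReal_le_one.2 (pow_le_one₀ (by positivity) ?_))
        rwa [div_le_one (by positivity)]

theorem ofReal_mul_ballIncrementEnergy_le_setLIntegral {ψ : ℝ → ℝ}
    (hψ_pos : ∀ t, 0 < t → 0 < ψ t) {r : ℝ} (hint : IntegrableOn (fun s => s / ψ s) (Ioo 0 r))
    {f : E → ℝ} (hf : Measurable f) :
    ENNReal.ofReal (finrank ℝ E / (2 * r) ^ (finrank ℝ E + 2) * ∫ s in Ioo 0 r, s / ψ s) *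
        ballIncrementEnergy μ f r ≤
      ∫⁻ t in Ioo 0 r, ENNReal.ofReal (finrank ℝ E / (t ^ (finrank ℝ E + 1) * ψ t)) *
        ballIncrementEnergy μ f t := by
  set d := finrank ℝ E
  have hnonneg : 0 ≤ᵐ[volume.restrict (Ioo 0 r)] fun s => d / (2 * r) ^ (d + 2) * (s / ψ s) :=
    (ae_restrict_iff' measurableSet_Ioo).2 (.of_forall fun s ⟨hs, hsr⟩ => by
      have := hψ_pos s hs
      have := hs.trans hsr
      positivity)
  rw [← integral_const_mul, ofReal_integral_eq_lintegral_ofReal (hint.const_mul _) hnonneg,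
    ← lintegral_mul_const'' _ (hint.const_mul _).aemeasurable.ennreal_ofReal]
  refine setLIntegral_mono' measurableSet_Ioo fun t ⟨ht, htr⟩ => ?_
  have := hψ_pos t ht
  have := ht.trans htr
  calc ENNReal.ofReal (d / (2 * r) ^ (d + 2) * (t / ψ t)) * ballIncrementEnergy μ f r
      = ENNReal.ofReal (d / (t ^ (d + 1) * ψ t)) *
          (ENNReal.ofReal ((t / (2 * r)) ^ (d + 2)) * ballIncrementEnergy μ f r) := by
        rw [← mul_assoc, ← ENNReal.ofReal_mul' (by positivity)]
        congr 2
        rw [div_pow, pow_succ t (d + 1)]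
        field_simp
    _ ≤ _ := by
        gcongr
        exact pow_mul_ballIncrementEnergy_le hf ht htr.le

theorem ofReal_one_div_pow_mul_lintegral_ball_le [Nontrivial E] {ψ : ℝ → ℝ} (hψ : Monotone ψ)
    (hψ_pos : ∀ t, 0 < t → 0 < ψ t) {r : ℝ} (hr : 0 < r)
    (hint : IntegrableOn (fun s => s / ψ s) (Ioo 0 r)) {J : E → E → ℝ} {c : ℝ} (hc : 0 < c)
    (hJ : ∀ x y, x ≠ y → c / (dist x y ^ finrank ℝ E * ψ (dist x y)) ≤ J x y) {f : E → ℝ}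
    (hf : Measurable f) :
    ENNReal.ofReal (1 / r ^ finrank ℝ E) *
        ∫⁻ x, ∫⁻ y in Metric.ball x r, ENNReal.ofReal ((f x - f y) ^ 2) ∂μ ∂μ ≤
      ENNReal.ofReal (2 ^ (finrank ℝ E + 3) / c * (r ^ 2 / (2 * ∫ s in Ioo 0 r, s / ψ s))) *
        jumpEnergy μ J f := by
  set d := finrank ℝ E
  set I := ∫ s in Ioo 0 r, s / ψ s
  have hd : 0 < d := finrank_pos
  have hI : 0 < I := setIntegral_Ioo_pos hr hint fun s hs => div_pos hs.1 (hψ_pos s hs.1)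
  have hlower : ENNReal.ofReal (c * (d / (2 * r) ^ (d + 2) * I)) * ballIncrementEnergy μ f r ≤
      jumpEnergy μ J f :=
    calc _ = ENNReal.ofReal c *
            (ENNReal.ofReal (d / (2 * r) ^ (d + 2) * I) * ballIncrementEnergy μ f r) := by
          rw [ENNReal.ofReal_mul hc.le, mul_assoc]
      _ ≤ ENNReal.ofReal c *
            ∫⁻ t, ENNReal.ofReal (d / (t ^ (d + 1) * ψ t)) * ballIncrementEnergy μ f t := by
          gcongr
          exact (ofReal_mul_ballIncrementEnergy_le_setLIntegral hψ_pos hint hf).trans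
            (setLIntegral_le_lintegral _ _)
      _ ≤ jumpEnergy μ J f :=
          ofReal_mul_lintegral_ballIncrementEnergy_le_jumpEnergy hψ hψ_pos hd.ne' hJ hf
  have hconst : 2 ^ (d + 3) / c * (r ^ 2 / (2 * I)) * (c * (d / (2 * r) ^ (d + 2) * I)) =
      d / r ^ d := by
    field_simp
    ring
  rw [lintegral_lintegral_ball_eq_ballIncrementEnergy hf]
  calc ENNReal.ofReal (1 / r ^ d) * ballIncrementEnergy μ f r
      ≤ ENNReal.ofReal (2 ^ (d + 3) / c * (r ^ 2 / (2 * I))) *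
          (ENNReal.ofReal (c * (d / (2 * r) ^ (d + 2) * I)) * ballIncrementEnergy μ f r) := by
        rw [← mul_assoc, ← ENNReal.ofReal_mul (by positivity), hconst]
        gcongr
        exact_mod_cast hd
    _ ≤ _ := by gcongr

end Haar

theorem monotone_indicator_Ioi {ψ : ℝ → ℝ} {a : ℝ} (hψ : MonotoneOn ψ (Ioi a))
    (hψ_nonneg : ∀ t ∈ Ioi a, 0 ≤ ψ t) : Monotone ((Ioi a).indicator ψ) := by
  intro s t hst
  by_cases hs : s ∈ Ioi a
  · have ht : t ∈ Ioi a := lt_of_lt_of_le hs hst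
    rw [indicator_of_mem hs, indicator_of_mem ht]
    exact hψ hs ht hst
  · rw [indicator_of_notMem hs]
    exact indicator_nonneg hψ_nonneg t

theorem stmt_17_general (d : ℕ) (hd : 1 ≤ d) (ψ Φ : ℝ → ℝ)
    (hψ_pos : ∀ r : ℝ, 0 < r → 0 < ψ r)
    (hψ_mono : ∀ r s : ℝ, 0 < r → r ≤ s → ψ r ≤ ψ s)
    (hψ_int : ∀ r : ℝ, 0 < r → IntegrableOn (fun s => s / ψ s) (Ioo 0 r))
    (hΦ : ∀ r : ℝ, 0 < r → Φ r = r ^ 2 / (2 * ∫ s in Ioo (0:ℝ) r, s / ψ s))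
    (J : EuclideanSpace ℝ (Fin d) → EuclideanSpace ℝ (Fin d) → ℝ) (Cb : ℝ) (hCb : 1 ≤ Cb)
    (hJ_lower : ∀ x y, x ≠ y → Cb⁻¹ / (dist x y ^ d * ψ (dist x y)) ≤ J x y) :
    ∃ C : ℝ, 0 < C ∧
      ∀ f : EuclideanSpace ℝ (Fin d) → ℝ,
        Measurable f → MemLp f 2 volume → (∃ M : ℝ, ∀ x, |f x| ≤ M) →
        ∀ r : ℝ, 0 < r →
          ENNReal.ofReal (1 / r ^ d) *
            ∫⁻ x, ∫⁻ y in Metric.ball x r, ENNReal.ofReal ((f x - f y) ^ 2) ≤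
          ENNReal.ofReal (C * Φ r) *
            ∫⁻ x, ∫⁻ y, ENNReal.ofReal ((f x - f y) ^ 2 * J x y) := by
  -- `ψ` need not be measurable; its extension by zero is monotone on `ℝ`, hence measurable.
  set ψ' := (Ioi (0 : ℝ)).indicator ψ
  have hψ' : ∀ t, 0 < t → ψ' t = ψ t := fun t ht => indicator_of_mem ht ψ
  have hψ'_mono : Monotone ψ' := monotone_indicator_Ioi
    (fun s hs t _ hst => hψ_mono s t hs hst) fun t ht => (hψ_pos t ht).le
  have : Nontrivial (EuclideanSpace ℝ (Fin d)) :=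
    finrank_pos_iff.1 (by rwa [finrank_euclideanSpace_fin])
  refine ⟨2 ^ (d + 3) * Cb, by positivity, fun f hf _ _ r hr => ?_⟩
  have hint : IntegrableOn (fun s => s / ψ' s) (Ioo 0 r) :=
    (hψ_int r hr).congr_fun (fun s hs => by rw [hψ' s hs.1]) measurableSet_Ioo
  have hI : ∫ s in Ioo 0 r, s / ψ' s = ∫ s in Ioo 0 r, s / ψ s :=
    setIntegral_congr_fun measurableSet_Ioo fun s hs => by rw [hψ' s hs.1]
  have hJ : ∀ x y, x ≠ y →
      Cb⁻¹ / (dist x y ^ finrank ℝ (EuclideanSpace ℝ (Fin d)) * ψ' (dist x y)) ≤ J x y :=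
    fun x y hxy => by
      rw [finrank_euclideanSpace_fin, hψ' _ (dist_pos.2 hxy)]
      exact hJ_lower x y hxy
  have h := ofReal_one_div_pow_mul_lintegral_ball_le (μ := volume) hψ'_mono
    (fun t ht => hψ' t ht ▸ hψ_pos t ht) hr hint (by positivity) hJ hf
  rwa [finrank_euclideanSpace_fin, hI, div_inv_eq_mul, ← hΦ r hr] at h

/-- Under the standing assumptions on `ψ` and with the jumping
kernel `J` comparable to `1/(|x-y|^d ψ(|x-y|))`, defining
`ℰ(f,f) = ∫∫ (f(x)-f(y))² J(x,y) dx dy ∈ [0,∞]`, there is `C > 0` (depending only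
on `d, C̄, β₁, β₂, C_L, C_U`) such that for every bounded measurable `f ∈ L²(ℝ^d)`
and every `r > 0`:
`(1/r^d) ∫_{ℝ^d} ∫_{B(x,r)} (f(x)-f(y))² dy dx ≤ C Φ(r) ℰ(f,f)`. -/
theorem stmt_17 (d : ℕ) (hd : 1 ≤ d) (ψ Φ : ℝ → ℝ) (β₁ β₂ CL CU : ℝ)
    (hβ₁ : 0 < β₁) (hβ₁₂ : β₁ ≤ β₂) (hCL : 0 < CL) (hCL1 : CL ≤ 1) (hCU : 1 ≤ CU)
    (hψ_pos : ∀ r : ℝ, 0 < r → 0 < ψ r)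
    (hψ_mono : ∀ r s : ℝ, 0 < r → r ≤ s → ψ r ≤ ψ s)
    (hψL : ∀ r R : ℝ, 0 < r → r ≤ R → CL * (R / r) ^ β₁ ≤ ψ R / ψ r)
    (hψU : ∀ r R : ℝ, 0 < r → r ≤ R → ψ R / ψ r ≤ CU * (R / r) ^ β₂)
    (hψ_int : ∀ r : ℝ, 0 < r → IntegrableOn (fun s => s / ψ s) (Ioo 0 r))
    (hΦ : ∀ r : ℝ, 0 < r → Φ r = r ^ 2 / (2 * ∫ s in Ioo (0:ℝ) r, s / ψ s))
    (J : EuclideanSpace ℝ (Fin d) → EuclideanSpace ℝ (Fin d) → ℝ) (Cb : ℝ) (hCb : 1 ≤ Cb)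
    (hJ_symm : ∀ x y, J x y = J y x)
    (hJ_meas : Measurable (Function.uncurry J))
    (hJ_lower : ∀ x y, x ≠ y → Cb⁻¹ / (dist x y ^ d * ψ (dist x y)) ≤ J x y)
    (hJ_upper : ∀ x y, x ≠ y → J x y ≤ Cb / (dist x y ^ d * ψ (dist x y))) :
    ∃ C : ℝ, 0 < C ∧
      ∀ f : EuclideanSpace ℝ (Fin d) → ℝ,
        Measurable f → MemLp f 2 volume → (∃ M : ℝ, ∀ x, |f x| ≤ M) →
        ∀ r : ℝ, 0 < r →
          ENNReal.ofReal (1 / r ^ d) *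
            ∫⁻ x, ∫⁻ y in Metric.ball x r, ENNReal.ofReal ((f x - f y) ^ 2) ≤
          ENNReal.ofReal (C * Φ r) *
            ∫⁻ x, ∫⁻ y, ENNReal.ofReal ((f x - f y) ^ 2 * J x y) :=
  stmt_17_general d hd ψ Φ hψ_pos hψ_mono hψ_int hΦ J Cb hCb hJ_lower
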